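/- Suppose x, y ∈ ℝ and for every prime p there is a rational q_p,ℓ decomposition such that x − y ∈ ∑_{ℓ ≠ p} ℚ·log ℓ. Then x = y. -/

import Mathlib

/-!
The logarithms of the primes are `ℚ`-linearly independent: clearing denominators reduces this
to `ℤ`, and an integral relation `∑ gᵢ log pᵢ = 0` says `∏ pᵢ ^ gᵢ = 1` in `ℚ`, whose `pⱼ`-adic
valuation is `gⱼ`. With respect to an independent family, a vector lying in the span of all the
family but one member, for every choice of that member, has all coordinates zero.
-/

open Finsupp Submodule in
theorem LinearIndepOn.eq_zero_of_forall_mem_span_diff_singleton {ι R M : Type*} [Ring R]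
    [AddCommGroup M] [Module R M] {v : ι → M} {s : Set ι} (hv : LinearIndepOn R v s)
    (hs : s.Nonempty) {x : M} (hx : ∀ i ∈ s, x ∈ span R (v '' (s \ {i}))) : x = 0 := by
  have hrepr (i : ι) (hi : i ∈ s) :
      ∃ l ∈ supported R R (s \ {i}), linearCombination R v l = x :=
    (mem_span_image_iff_linearCombination R).mp (hx i hi)
  obtain ⟨i₀, hi₀⟩ := hs
  obtain ⟨l, hl, rfl⟩ := hrepr i₀ hi₀
  suffices l = 0 by simp [this]
  ext i
  by_cases hi : i ∈ s
  · obtain ⟨l', hl', hll'⟩ := hrepr i hi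
    have hl'_eq : l' = l := sub_eq_zero.mp <| linearIndepOn_iff.mp hv _
      (sub_mem (supported_mono Set.sdiff_subset hl') (supported_mono Set.sdiff_subset hl))
      (by rw [map_sub, hll', sub_self])
    rw [← hl'_eq]
    exact notMem_support_iff.mp fun h => (hl' h).2 rfl
  · exact notMem_support_iff.mp fun h => hi (hl h).1

theorem padicValRat_finset_prod {ι : Type*} (p : ℕ) [Fact p.Prime] (t : Finset ι) (f : ι → ℚ)
    (hf : ∀ i ∈ t, f i ≠ 0) : padicValRat p (∏ i ∈ t, f i) = ∑ i ∈ t, padicValRat p (f i) := by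
  classical
  induction t using Finset.induction_on with
  | empty => simp
  | insert j t hj ih =>
    rw [Finset.prod_insert hj, Finset.sum_insert hj,
      padicValRat.mul (hf j (t.mem_insert_self j))
        (Finset.prod_ne_zero_iff.mpr fun i hi => hf i (Finset.mem_insert_of_mem hi)),
      ih fun i hi => hf i (Finset.mem_insert_of_mem hi)]

theorem padicValRat_natCast_of_prime {p q : ℕ} (hp : p.Prime) (hq : q.Prime) :
    padicValRat p q = if q = p then 1 else 0 := by
  have := Fact.mk hp
  have := Fact.mk hq
  split_ifs with h
  · subst h
    simp [padicValNat_self]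
  · simp [padicValNat_primes (Ne.symm h)]

theorem linearIndepOn_int_log_primes :
    LinearIndepOn ℤ (fun n : ℕ => Real.log n) {p | p.Prime} := by
  refine linearIndepOn_iff'.mpr fun t g ht hsum => ?_
  have ht' : ∀ i ∈ t, i.Prime := ht
  have hne : ∀ i ∈ t, (i : ℚ) ^ g i ≠ 0 := fun i hi =>
    zpow_ne_zero _ (Nat.cast_ne_zero.mpr (ht' i hi).ne_zero)
  set q : ℚ := ∏ i ∈ t, (i : ℚ) ^ g i with hq
  have hq_one : q = 1 := by
    have hpos : (0 : ℝ) < q := by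
      rw [hq]
      push_cast
      exact Finset.prod_pos fun i hi => zpow_pos (by exact_mod_cast (ht' i hi).pos) _
    have hlog : Real.log q = 0 := by
      rw [hq]
      push_cast
      rw [Real.log_prod fun i hi => zpow_ne_zero _ (Nat.cast_ne_zero.mpr (ht' i hi).ne_zero)]
      simpa [Real.log_zpow] using hsum
    exact_mod_cast Real.eq_one_of_pos_of_log_eq_zero hpos hlog
  intro j hj
  have := Fact.mk (ht' j hj)
  have hval : padicValRat j q = g j := by
    rw [hq, padicValRat_finset_prod j t _ hne, Finset.sum_congr rfl fun i hi => by
      rw [padicValRat.zpow, padicValRat_natCast_of_prime (ht' j hj) (ht' i hi)]]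
    simp [hj]
  simpa [hq_one] using hval.symm

theorem linearIndepOn_log_primes :
    LinearIndepOn ℚ (fun n : ℕ => Real.log n) {p | p.Prime} := by
  rw [LinearIndepOn, ← LinearIndependent.iff_fractionRing ℤ ℚ]
  exact linearIndepOn_int_log_primes

/-- If for every prime `p` the difference `x - y` lies in the `ℚ`-span of the
logarithms of the primes different from `p`, then `x = y`. -/
theorem eq_of_sub_mem_all_spans_log_primes (x y : ℝ)
    (hx : ∀ p : ℕ, p.Prime →
      x - y ∈ Submodule.span ℚ {r : ℝ | ∃ ℓ : ℕ, ℓ.Prime ∧ ℓ ≠ p ∧ r = Real.log ℓ}) :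
    x = y := by
  have hset (p : ℕ) : {r : ℝ | ∃ ℓ : ℕ, ℓ.Prime ∧ ℓ ≠ p ∧ r = Real.log ℓ} =
      (fun n : ℕ => Real.log n) '' ({ℓ | ℓ.Prime} \ {p}) := by
    ext r
    simp [eq_comm, and_assoc]
  refine sub_eq_zero.mp <| linearIndepOn_log_primes.eq_zero_of_forall_mem_span_diff_singleton
    ⟨2, Nat.prime_two⟩ fun p hp => ?_
  rw [← hset p]
  exact hx p hp
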